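/- arXiv:math/9604217 — 2 statements merged into one kernel-verified Lean document; each statement's English description precedes it below -/
import Mathlib

section
/- Let (S_α)_{α<ω₁} be a Schreier hierarchy and let N = (n_i)_{i≥1} be a strictly increasing sequence of positive integers. Then there exists a subsequence L = (ℓ_i)_{i≥1} ∈ [N] such that for every countable ordinal α and every nonempty finite set F ⊂ ℕ of indices: if {ℓ_i : i ∈ F} ∈ S_α, then {ℓ_i : i ∈ F \ {min F}} ∈ S_α(N). -/
open Filter

noncomputable section

/-- `c₀₀`: the finitely supported real sequences. -/
abbrev C00 : Type := ℕ →₀ ℝ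

/-- The unit vector basis of `c₀₀`. -/
def eBasis (i : ℕ) : C00 := Finsupp.single i 1

/-- `f` is a norm on `c₀₀`. -/
def IsNorm (f : C00 → ℝ) : Prop :=
  (∀ v w : C00, f (v + w) ≤ f v + f w) ∧
  (∀ (c : ℝ) (v : C00), f (c • v) = |c| * f v) ∧
  (∀ v : C00, v ≠ 0 → 0 < f v)

/-- `E < F` for finite sets of naturals: every element of `E` is smaller than
every element of `F` (vacuously true if one of them is empty). -/
def FinLt (E F : Finset ℕ) : Prop := ∀ a ∈ E, ∀ b ∈ F, a < b

/-- `min ran(v)` = the minimum of the support of `v`. -/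
def minSupp (v : C00) : ℕ := sInf {j | v j ≠ 0}

/-- `max ran(v)` = the maximum of the support of `v`. -/
def maxSupp (v : C00) : ℕ := sSup {j | v j ≠ 0}

/-- `ran(v)`: the smallest integer interval containing the support of `v`. -/
def ranSet (v : C00) : Set ℕ := Set.Icc (minSupp v) (maxSupp v)

/-- `E` is an interval of naturals. -/
def IsInterval (E : Finset ℕ) : Prop :=
  ∀ a ∈ E, ∀ b ∈ E, ∀ c : ℕ, a ≤ c → c ≤ b → c ∈ E

/-- The Schreier families `S_n`, `n ∈ ℕ`. -/
def SchreierFam : ℕ → Set (Finset ℕ)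
  | 0 => {F : Finset ℕ | F.card ≤ 1}
  | (n + 1) => {F : Finset ℕ | ∃ (k : ℕ) (Fs : Fin k → Finset ℕ),
      (∀ i, Fs i ∈ SchreierFam n) ∧
      (∀ i j : Fin k, i < j → FinLt (Fs i) (Fs j)) ∧
      (∀ i, ∀ a ∈ Fs i, k ≤ a) ∧
      F = Finset.univ.biUnion Fs}

/-- `S_ω = {F : n ≤ F and F ∈ S_n for some n}`. -/
def SchreierOmega : Set (Finset ℕ) :=
  {F : Finset ℕ | ∃ n : ℕ, (∀ a ∈ F, n ≤ a) ∧ F ∈ SchreierFam n}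

/-- The restriction `Ex` of `x` to a finite set `E`. -/
def restr (E : Finset ℕ) (v : C00) : C00 := v.filter (fun j => j ∈ E)

/-- `(E_i)` is an admissible family of (nonempty, finite) sets for the family `S`:
`E_1 < E_2 < ⋯` and `{min E_i} ∈ S`. -/
def AdmissibleSets (S : Set (Finset ℕ)) {m : ℕ} (E : Fin m → Finset ℕ) : Prop :=
  (∀ i, (E i).Nonempty) ∧
  (∀ i j : Fin m, i < j → FinLt (E i) (E j)) ∧
  (Finset.univ.image fun i => sInf ((E i : Set ℕ))) ∈ S

/-- `(E_i)` is an admissible family of (nonempty) intervals for the family `S`. -/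
def AdmissibleIntervals (S : Set (Finset ℕ)) {m : ℕ} (E : Fin m → Finset ℕ) : Prop :=
  (∀ i, (E i).Nonempty ∧ IsInterval (E i)) ∧
  (∀ i j : Fin m, i < j → FinLt (E i) (E j)) ∧
  (Finset.univ.image fun i => sInf ((E i : Set ℕ))) ∈ S

/-- `nrm` satisfies the implicit mixed Tsirelson norm equation with parameters `θ_q`
and families `Sq q` (`q ≥ 1`):
`‖x‖ = max(‖x‖_∞, sup{θ_q Σ ‖E_i x‖ : q ≥ 1, (E_i) q-admissible})`. -/
def MixedTsirelsonNormGen (θ : ℕ → ℝ) (Sq : ℕ → Set (Finset ℕ)) (nrm : C00 → ℝ) : Prop :=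
  ∀ x : C00, nrm x =
    max (sSup {r : ℝ | ∃ j : ℕ, r = |x j|})
      (sSup {r : ℝ | ∃ (q m : ℕ) (E : Fin m → Finset ℕ), 1 ≤ q ∧
        AdmissibleSets (Sq q) E ∧ r = θ q * ∑ i, nrm (restr (E i) x)})

/-- `nrm` is the norm of the mixed Tsirelson space `T(θ_n, S_n)_{n ∈ ℕ}`. -/
def MixedTsirelsonNorm (θ : ℕ → ℝ) (nrm : C00 → ℝ) : Prop :=
  MixedTsirelsonNormGen θ SchreierFam nrm

/-- `(θ_n)_{n ≥ 1}` is a regular sequence. -/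
def RegularSeq (θ : ℕ → ℝ) : Prop :=
  (∀ n : ℕ, 1 ≤ n → 0 < θ n ∧ θ n < 1) ∧
  (∀ n : ℕ, 1 ≤ n → θ (n + 1) ≤ θ n) ∧
  Tendsto θ atTop (nhds 0) ∧
  (∀ n m : ℕ, 1 ≤ n → 1 ≤ m → θ n * θ m ≤ θ (n + m))

/-- The `i`-th block `Σ_{j = m_i}^{m_{i+1} - 1} a_j x_j` of a block sequence of `(x_j)`
with coefficients `a` and breakpoints `m`. -/
def blk (x : ℕ → C00) (a : ℕ → ℝ) (m : ℕ → ℕ) (i : ℕ) : C00 :=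
  ∑ j ∈ Finset.Ico (m i) (m (i + 1)), a j • x j

/-- The minimum of the range w.r.t. `(x_j)` of the `i`-th block: the least `j` in
`[m_i, m_{i+1})` with `a_j ≠ 0`. -/
def minRangeIdx (a : ℕ → ℝ) (m : ℕ → ℕ) (i : ℕ) : ℕ :=
  sInf {j : ℕ | j ∈ Finset.Ico (m i) (m (i + 1)) ∧ a j ≠ 0}

/-- `(x_i)` is an (infinite) block sequence of `(e_i)`: nonzero and `x_1 < x_2 < ⋯`. -/
def IsBlockSeq (x : ℕ → C00) : Prop :=
  (∀ i, x i ≠ 0) ∧ ∀ i, FinLt (x i).support (x (i + 1)).support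

/-- `(z_i)` is an (infinite) block sequence of `(x_i)`. -/
def IsBlockOf (x z : ℕ → C00) : Prop :=
  ∃ (a : ℕ → ℝ) (m : ℕ → ℕ), StrictMono m ∧ (∀ i, z i = blk x a m i) ∧ ∀ i, z i ≠ 0

/-- The set of `δ ≥ 0` witnessing the `ℓ_1`-estimate for all finite block sequences of
`(x_i)` that are admissible (for the family `S`) *with respect to `(x_i)`*. -/
def deltaSetX (S : Set (Finset ℕ)) (nrm : C00 → ℝ) (x : ℕ → C00) : Set ℝ :=
  {δ : ℝ | 0 ≤ δ ∧ ∀ (n : ℕ) (a : ℕ → ℝ) (m : ℕ → ℕ), StrictMono m →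
    (∀ i < n, blk x a m i ≠ 0) →
    (Finset.range n).image (fun i => minRangeIdx a m i) ∈ S →
    δ * ∑ i ∈ Finset.range n, nrm (blk x a m i) ≤
      nrm (∑ i ∈ Finset.range n, blk x a m i)}

/-- The set of `δ ≥ 0` witnessing the `ℓ_1`-estimate for all finite block sequences of
`(x_i)` that are admissible (for the family `S`) *with respect to `(e_i)`*. -/
def deltaSetE (S : Set (Finset ℕ)) (nrm : C00 → ℝ) (x : ℕ → C00) : Set ℝ :=
  {δ : ℝ | 0 ≤ δ ∧ ∀ (n : ℕ) (a : ℕ → ℝ) (m : ℕ → ℕ), StrictMono m →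
    (∀ i < n, blk x a m i ≠ 0) →
    (Finset.range n).image (fun i => minSupp (blk x a m i)) ∈ S →
    δ * ∑ i ∈ Finset.range n, nrm (blk x a m i) ≤
      nrm (∑ i ∈ Finset.range n, blk x a m i)}

/-- `δ_α(x_i)` (α-admissibility w.r.t. `(x_i)`), for the α-th family `S`. -/
def deltaX (S : Set (Finset ℕ)) (nrm : C00 → ℝ) (x : ℕ → C00) : ℝ :=
  sSup (deltaSetX S nrm x)

/-- `δ_α((x_i),(e_i))` (α-admissibility w.r.t. `(e_i)`), for the α-th family `S`. -/
def deltaE (S : Set (Finset ℕ)) (nrm : C00 → ℝ) (x : ℕ → C00) : ℝ :=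
  sSup (deltaSetE S nrm x)

/-- `nrm'` is an equivalent norm to `nrm`. -/
def EquivNormOn (nrm nrm' : C00 → ℝ) : Prop :=
  ∃ c C : ℝ, 0 < c ∧ (∀ x, c * nrm x ≤ nrm' x) ∧ ∀ x, nrm' x ≤ C * nrm x

/-- The set whose supremum is `δ̈`(S)`(y_i)`: all values `δ_S((z_i), |·|)` where `|·|`
is an equivalent norm on `X` and `(z_i)` is a block sequence of `(y_i)`. -/
def dessSet (S : Set (Finset ℕ)) (nrm : C00 → ℝ) (y : ℕ → C00) : Set ℝ :=
  {d : ℝ | ∃ (nrm' : C00 → ℝ) (z : ℕ → C00), IsNorm nrm' ∧ EquivNormOn nrm nrm' ∧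
    IsBlockOf y z ∧ d = deltaX S nrm' z}

/-- A Schreier hierarchy `(S_α)_{α < ω₁}`. -/
structure IsSchreierHierarchy (S : Ordinal → Set (Finset ℕ)) : Prop where
  zero : S 0 = {F : Finset ℕ | F.card ≤ 1}
  succ : ∀ α : Ordinal, α < Ordinal.omega 1 →
    S (α + 1) = {F : Finset ℕ | ∃ (k : ℕ) (Fs : Fin k → Finset ℕ),
      (∀ i, Fs i ∈ S α) ∧
      (∀ i j : Fin k, i < j → FinLt (Fs i) (Fs j)) ∧
      (∀ i, ∀ a ∈ Fs i, k ≤ a) ∧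
      F = Finset.univ.biUnion Fs}
  limit : ∀ α : Ordinal, α < Ordinal.omega 1 → Order.IsSuccLimit α →
    ∃ f : ℕ → Ordinal, StrictMono f ∧ (⨆ n, f n) = α ∧
      S α = {F : Finset ℕ | ∃ n : ℕ, (∀ a ∈ F, n ≤ a) ∧ F ∈ S (f n)}

/-- `(y_i)` Δ-stabilizes `γ = (γ_α)_{α<ω₁}`. -/
def DeltaStabilizes (S : Ordinal → Set (Finset ℕ)) (nrm : C00 → ℝ)
    (y : ℕ → C00) (γ : Ordinal → ℝ) : Prop :=
  ∃ ε : ℕ → ℝ, Antitone ε ∧ Tendsto ε atTop (nhds 0) ∧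
    ∀ α : Ordinal, α < Ordinal.omega 1 → ∃ m : ℕ, ∀ n : ℕ, m ≤ n →
      ∀ z : ℕ → C00, IsBlockOf (fun i => y (i + n)) z →
        |deltaX (S α) nrm z - γ α| < ε n

/-- `(y_i)` Δ_{(e_i)}-stabilizes `γ = (γ_α)_{α<ω₁}`. -/
def DeltaStabilizesE (S : Ordinal → Set (Finset ℕ)) (nrm : C00 → ℝ)
    (y : ℕ → C00) (γ : Ordinal → ℝ) : Prop :=
  ∃ ε : ℕ → ℝ, Antitone ε ∧ Tendsto ε atTop (nhds 0) ∧
    ∀ α : Ordinal, α < Ordinal.omega 1 → ∃ m : ℕ, ∀ n : ℕ, m ≤ n →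
      ∀ z : ℕ → C00, IsBlockOf (fun i => y (i + n)) z →
        |deltaE (S α) nrm z - γ α| < ε n

/-- `(e_i)` is a basic sequence for the norm `nrm`. -/
def IsBasicE (nrm : C00 → ℝ) : Prop :=
  ∃ K : ℝ, ∀ (a : ℕ → ℝ) (m n : ℕ), m ≤ n →
    nrm (∑ i ∈ Finset.range m, a i • eBasis i) ≤
      K * nrm (∑ i ∈ Finset.range n, a i • eBasis i)

/-- The auxiliary norm `‖x‖_p` (`‖·‖_0 = ‖·‖`). -/
def pnorm (θ : ℕ → ℝ) (nrm : C00 → ℝ) (p : ℕ) (x : C00) : ℝ :=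
  if p = 0 then nrm x
  else θ p * sSup {r : ℝ | ∃ (m : ℕ) (E : Fin m → Finset ℕ),
    AdmissibleIntervals (SchreierFam p) E ∧ r = ∑ i, nrm (restr (E i) x)}

/-- The auxiliary seminorm `‖x‖_{N,p}`. -/
def nNorm (θ : ℕ → ℝ) (nrm : C00 → ℝ) (N p : ℕ) (x : C00) : ℝ :=
  sSup {r : ℝ | ∃ E : Fin N → Finset ℕ, (∀ i, IsInterval (E i)) ∧
    (∀ i j : Fin N, i < j → FinLt (E i) (E j)) ∧ (∀ i, ∀ a ∈ E i, N ≤ a) ∧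
    r = ∑ i, pnorm θ nrm p (restr (E i) x)}

/-- The auxiliary norm `‖x‖_{S_q,p}`. -/
def sNNorm (θ : ℕ → ℝ) (nrm : C00 → ℝ) (q p : ℕ) (x : C00) : ℝ :=
  sSup {r : ℝ | ∃ (m : ℕ) (E : Fin m → Finset ℕ),
    AdmissibleIntervals (SchreierFam q) E ∧ r = ∑ i, pnorm θ nrm p (restr (E i) x)}

def IsHereditarySpreading (𝒮 : Set (Finset ℕ)) : Prop :=
  ∀ A ∈ 𝒮, ∀ (B : Finset ℕ) (ψ : ℕ → ℕ), Set.MapsTo ψ B A → (∀ b ∈ B, ψ b ≤ b) →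
    StrictMonoOn ψ B → B ∈ 𝒮

def schreierSucc (𝒮 : Set (Finset ℕ)) : Set (Finset ℕ) :=
  {F : Finset ℕ | ∃ (k : ℕ) (Fs : Fin k → Finset ℕ),
    (∀ i, Fs i ∈ 𝒮) ∧
    (∀ i j : Fin k, i < j → FinLt (Fs i) (Fs j)) ∧
    (∀ i, ∀ a ∈ Fs i, k ≤ a) ∧
    F = Finset.univ.biUnion Fs}

namespace IsHereditarySpreading

theorem card_le_one : IsHereditarySpreading {F : Finset ℕ | F.card ≤ 1} :=
  fun _ hA _ _ hmaps _ hψ => (Finset.card_le_card_of_injOn _ hmaps hψ.injOn).trans hA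

theorem schreierSucc {𝒮 : Set (Finset ℕ)} (h𝒮 : IsHereditarySpreading 𝒮) :
    IsHereditarySpreading (schreierSucc 𝒮) := by
  rintro A ⟨k, Fs, hFs, hlt, hk, rfl⟩ B ψ hmaps hle hψ
  refine ⟨k, fun i => B.filter (ψ · ∈ Fs i), fun i => ?_, ?_, ?_, ?_⟩
  · exact h𝒮 _ (hFs i) _ ψ (fun b hb => (Finset.mem_filter.mp hb).2)
      (fun b hb => hle b (Finset.mem_filter.mp hb).1)
      (hψ.mono fun b hb => (Finset.mem_filter.mp hb).1)
  · intro i j hij b hb b' hb'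
    rw [Finset.mem_filter] at hb hb'
    exact (hψ.lt_iff_lt hb.1 hb'.1).mp (hlt i j hij _ hb.2 _ hb'.2)
  · intro i b hb
    rw [Finset.mem_filter] at hb
    exact (hk i _ hb.2).trans (hle b hb.1)
  · ext b
    simp only [Finset.mem_biUnion, Finset.mem_filter, Finset.mem_univ, true_and]
    refine ⟨fun hb => ?_, fun ⟨_, hb, _⟩ => hb⟩
    obtain ⟨i, -, hi⟩ := Finset.mem_biUnion.mp (hmaps hb)
    exact ⟨i, hb, hi⟩

theorem setOf_exists_le {T : ℕ → Set (Finset ℕ)} (hT : ∀ n, IsHereditarySpreading (T n)) :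
    IsHereditarySpreading {F : Finset ℕ | ∃ n : ℕ, (∀ a ∈ F, n ≤ a) ∧ F ∈ T n} := by
  rintro A ⟨n, hn, hA⟩ B ψ hmaps hle hψ
  exact ⟨n, fun b hb => (hn _ (hmaps hb)).trans (hle b hb), hT n A hA B ψ hmaps hle hψ⟩

end IsHereditarySpreading

theorem IsSchreierHierarchy.isHereditarySpreading {S : Ordinal → Set (Finset ℕ)}
    (hS : IsSchreierHierarchy S) (α : Ordinal) (hα : α < Ordinal.omega 1) :
    IsHereditarySpreading (S α) := by
  induction α using WellFoundedLT.induction with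
  | ind α ih =>
  rcases Ordinal.zero_or_succ_or_isSuccLimit α with rfl | ⟨β, rfl⟩ | hlim
  · rw [hS.zero]
    exact IsHereditarySpreading.card_le_one
  · have hβ : β < Order.succ β := Order.lt_succ β
    have hβω : β < Ordinal.omega 1 := hβ.trans hα
    rw [Order.succ_eq_add_one, hS.succ β hβω]
    exact (ih β hβ hβω).schreierSucc
  · obtain ⟨f, hf, hsup, heq⟩ := hS.limit α hα hlim
    have hfα : ∀ n, f n < α := fun n =>
      hsup ▸ (hf n.lt_succ_self).trans_le (Ordinal.le_iSup f (n + 1))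
    rw [heq]
    exact IsHereditarySpreading.setOf_exists_le fun n => ih _ (hfα n) ((hfα n).trans hα)

def fastSeq (N : ℕ → ℕ) : ℕ → ℕ
  | 0 => 0
  | j + 1 => max (fastSeq N j + 1) (N (fastSeq N j))

theorem fastSeq_strictMono (N : ℕ → ℕ) : StrictMono (fastSeq N) :=
  strictMono_nat_of_lt_succ fun _ => (Nat.lt_succ_self _).trans_le (le_max_left _ _)

theorem le_fastSeq_succ (N : ℕ → ℕ) (j : ℕ) : N (fastSeq N j) ≤ fastSeq N (j + 1) :=
  le_max_right _ _

theorem Finset.sup_filter_lt_spec {F : Finset ℕ} (hF : F.Nonempty) {i : ℕ}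
    (hi : F.min' hF < i) :
    (F.filter (· < i)).sup id ∈ F ∧ (F.filter (· < i)).sup id < i ∧
      ∀ j ∈ F, j < i → j ≤ (F.filter (· < i)).sup id := by
  have hne : (F.filter (· < i)).Nonempty := ⟨_, Finset.mem_filter.mpr ⟨F.min'_mem hF, hi⟩⟩
  obtain ⟨p, hp, hsup⟩ := Finset.exists_mem_eq_sup _ hne id
  rw [Finset.mem_filter] at hp
  refine ⟨hsup ▸ hp.1, hsup ▸ hp.2, fun j hj hji => ?_⟩
  exact Finset.le_sup (f := id) (Finset.mem_filter.mpr ⟨hj, hji⟩)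

/-- Each `g i` with `i ∈ F \ {min F}` is dominated by `h (g p)` for the predecessor `p` of `i`
in `F`, since `h (g p) ≤ g (p + 1) ≤ g i`. -/
theorem IsHereditarySpreading.image_erase_min'_mem {𝒮 : Set (Finset ℕ)}
    (h𝒮 : IsHereditarySpreading 𝒮) {g h : ℕ → ℕ} (hg : StrictMono g) (hh : StrictMono h)
    (hgh : ∀ j, h (g j) ≤ g (j + 1)) {F : Finset ℕ} (hF : F.Nonempty)
    (hmem : F.image (fun i => h (g i)) ∈ 𝒮) : (F.erase (F.min' hF)).image g ∈ 𝒮 := by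
  set pred : ℕ → ℕ := fun i => (F.filter (· < i)).sup id
  have hpred : ∀ i ∈ F.erase (F.min' hF),
      pred i ∈ F ∧ pred i < i ∧ ∀ j ∈ F, j < i → j ≤ pred i := fun i hi =>
    Finset.sup_filter_lt_spec hF <|
      (F.min'_le i (Finset.mem_of_mem_erase hi)).lt_of_ne (Finset.ne_of_mem_erase hi).symm
  set ψ : ℕ → ℕ := fun b => h (g ((F.filter (g · < b)).sup id))
  have hψg : ∀ i, ψ (g i) = h (g (pred i)) := fun i => by simp only [ψ, pred, hg.lt_iff_lt]
  refine h𝒮 _ hmem _ ψ ?_ ?_ ?_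
  · intro _ hb
    obtain ⟨i, hi, rfl⟩ := Finset.mem_image.mp hb
    rw [hψg]
    exact Finset.mem_image_of_mem _ (hpred i hi).1
  · intro _ hb
    obtain ⟨i, hi, rfl⟩ := Finset.mem_image.mp hb
    rw [hψg]
    exact (hgh _).trans (hg.monotone (hpred i hi).2.1)
  · intro _ hb _ hb' hlt
    obtain ⟨i, hi, rfl⟩ := Finset.mem_image.mp hb
    obtain ⟨i', hi', rfl⟩ := Finset.mem_image.mp hb'
    rw [hψg, hψg]
    have hle : i ≤ pred i' :=
      (hpred i' hi').2.2 i (Finset.mem_of_mem_erase hi) (hg.lt_iff_lt.mp hlt)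
    exact hh (hg ((hpred i hi).2.1.trans_le hle))

theorem schreier_drop_min_subsequence_general
    (S : Ordinal → Set (Finset ℕ)) (hS : IsSchreierHierarchy S)
    (N : ℕ → ℕ) (hmono : StrictMono N) :
    ∃ g : ℕ → ℕ, StrictMono g ∧
      ∀ α : Ordinal, α < Ordinal.omega 1 → ∀ F : Finset ℕ, F.Nonempty →
        F.image (fun i => N (g i)) ∈ S α →
        ∃ G ∈ S α, (F.erase (sInf (F : Set ℕ))).image (fun i => N (g i)) = G.image N := by
  refine ⟨fastSeq N, fastSeq_strictMono N, fun α hα F hF hmem => ?_⟩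
  refine ⟨_, (hS.isHereditarySpreading α hα).image_erase_min'_mem (fastSeq_strictMono N) hmono
    (le_fastSeq_succ N) hF hmem, ?_⟩
  rw [hF.csInf_eq_min', Finset.image_image]
  rfl

/-- Corollary 2.4: for every strictly increasing sequence `N = (n_i)` of positive
integers there is a subsequence `L = (ℓ_i) ∈ [N]` such that for every `α < ω₁` and
every nonempty finite `F`: `(ℓ_i)_{i ∈ F} ∈ S_α` implies
`(ℓ_i)_{i ∈ F \ {min F}} ∈ S_α(N)`. -/
theorem schreier_drop_min_subsequence
    (S : Ordinal → Set (Finset ℕ)) (hS : IsSchreierHierarchy S)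
    (N : ℕ → ℕ) (hmono : StrictMono N) (hpos : ∀ i, 0 < N i) :
    ∃ g : ℕ → ℕ, StrictMono g ∧
      ∀ α : Ordinal, α < Ordinal.omega 1 → ∀ F : Finset ℕ, F.Nonempty →
        F.image (fun i => N (g i)) ∈ S α →
        ∃ G ∈ S α, (F.erase (sInf (F : Set ℕ))).image (fun i => N (g i)) = G.image N :=
  schreier_drop_min_subsequence_general S hS N hmono

end
end

section
/- Let X = T(θ_n,S_n)_{n∈ℕ} be a regular mixed Tsirelson space with norm ‖·‖. Then for every j ≥ 1, δ_j(X) = θ_j; that is, δ_j computed for the unit vector basis (e_i) itself equals θ_j. -/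
open Filter

noncomputable section

/-!
The lower bound `θ_j ≤ δ_j` is the norming equation itself: the supports of a `j`-admissible
block sequence form a `j`-admissible family, so `‖Σ yᵢ‖ ≥ θ_j Σ ‖yᵢ‖`.

For the upper bound, induction on the size of the support gives
`‖x‖ ≤ θ_{b+1} ‖x‖_{ℓ₁} + ‖x‖_{S_b}` whenever `x 0 = 0`, where `‖·‖_{S_b}` is the Schreier
norm. Repeated averaging produces, for every `ε > 0`, a special convex combination
`x = Σ_{k ∈ F} x_k e_k` with `F ∈ S_j`, `‖x‖_{ℓ₁} = 1` and `‖x‖_{S_{j-1}} ≤ ε`. Its terms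
`x_k e_k` form a `j`-admissible block sequence with `Σ ‖x_k e_k‖ = 1`, so
`δ_j ≤ ‖x‖ ≤ θ_j + ε`.
-/

open Finset Function

namespace IsNorm

variable {f : C00 → ℝ}

lemma map_zero (hf : IsNorm f) : f 0 = 0 := by
  simpa using hf.2.1 0 0

lemma nonneg (hf : IsNorm f) (v : C00) : 0 ≤ f v := by
  rcases eq_or_ne v 0 with rfl | hv
  · exact hf.map_zero.ge
  · exact (hf.2.2 v hv).le

lemma sum_le (hf : IsNorm f) {ι : Type*} (s : Finset ι) (v : ι → C00) :
    f (∑ i ∈ s, v i) ≤ ∑ i ∈ s, f (v i) :=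
  le_sum_of_subadditive f hf.map_zero.le hf.1 s v

end IsNorm

namespace RegularSeq

variable {θ : ℕ → ℝ}

lemma pos (hθ : RegularSeq θ) {n : ℕ} (hn : 1 ≤ n) : 0 < θ n := (hθ.1 n hn).1

lemma le_one (hθ : RegularSeq θ) {n : ℕ} (hn : 1 ≤ n) : θ n ≤ 1 := (hθ.1 n hn).2.le

lemma anti (hθ : RegularSeq θ) {p q : ℕ} (hp : 1 ≤ p) (hpq : p ≤ q) : θ q ≤ θ p :=
  antitoneOn_nat_Ici_of_succ_le (fun n hn => hθ.2.1 n hn) hp (hp.trans hpq) hpq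

lemma mul_le (hθ : RegularSeq θ) {p q : ℕ} (hp : 1 ≤ p) (hq : 1 ≤ q) :
    θ p * θ q ≤ θ (p + q) :=
  hθ.2.2.2 p q hp hq

end RegularSeq

@[simp]
lemma restr_apply (E : Finset ℕ) (v : C00) (k : ℕ) :
    restr E v k = if k ∈ E then v k else 0 :=
  Finsupp.filter_apply _ v k

lemma support_restr (E : Finset ℕ) (v : C00) :
    (restr E v).support = {k ∈ v.support | k ∈ E} :=
  Finsupp.support_filter _ v

lemma support_restr_subset (E : Finset ℕ) (v : C00) : (restr E v).support ⊆ E := by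
  rw [support_restr]
  exact fun k hk => (mem_filter.1 hk).2

lemma restr_eq_self {E : Finset ℕ} {v : C00} (h : v.support ⊆ E) : restr E v = v :=
  (Finsupp.filter_eq_self_iff _ v).2 fun _ hk => h (Finsupp.mem_support_iff.2 hk)

lemma restr_eq_zero {E : Finset ℕ} {v : C00} (h : Disjoint v.support E) : restr E v = 0 :=
  (Finsupp.filter_eq_zero_iff _ v).2 fun _ hk =>
    Finsupp.notMem_support_iff.1 fun hv => disjoint_left.1 h hv hk

lemma restr_sum (E : Finset ℕ) {ι : Type*} (s : Finset ι) (v : ι → C00) :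
    restr E (∑ i ∈ s, v i) = ∑ i ∈ s, restr E (v i) :=
  Finsupp.filter_sum s v

lemma FinLt.disjoint {E F : Finset ℕ} (h : FinLt E F) : Disjoint E F :=
  disjoint_left.2 fun k hkE hkF => lt_irrefl k (h k hkE k hkF)

lemma pairwise_disjoint_of_finLt {ι : Type*} [LinearOrder ι] {E : ι → Finset ℕ}
    (h : ∀ i j, i < j → FinLt (E i) (E j)) : Pairwise (Disjoint on E) := fun i j hij =>
  hij.lt_or_gt.elim (fun hlt => (h i j hlt).disjoint) fun hgt => (h j i hgt).disjoint.symm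

lemma AdmissibleSets.pairwise_disjoint {S : Set (Finset ℕ)} {m : ℕ} {E : Fin m → Finset ℕ}
    (hE : AdmissibleSets S E) : Pairwise (Disjoint on E) :=
  pairwise_disjoint_of_finLt hE.2.1

lemma strictMono_sInf_of_finLt {ι : Type*} [LinearOrder ι] {E : ι → Finset ℕ}
    (hne : ∀ i, (E i).Nonempty) (hlt : ∀ i j, i < j → FinLt (E i) (E j)) :
    StrictMono fun i => sInf (E i : Set ℕ) := fun i j hij =>
  hlt i j hij _ (mod_cast Nat.sInf_mem (coe_nonempty.2 (hne i)))
    _ (mod_cast Nat.sInf_mem (coe_nonempty.2 (hne j)))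

namespace SchreierFam

lemma empty_mem (n : ℕ) : (∅ : Finset ℕ) ∈ SchreierFam n := by
  cases n with
  | zero => simp [SchreierFam]
  | succ n => exact ⟨0, fun _ => ∅, finZeroElim, finZeroElim, finZeroElim, by simp⟩

lemma singleton_mem (n : ℕ) {k : ℕ} (hk : 1 ≤ k) : {k} ∈ SchreierFam n := by
  induction n with
  | zero => simp [SchreierFam]
  | succ n ih =>
    refine ⟨1, fun _ => {k}, fun _ => ih, fun i j hij => absurd hij (by omega), ?_, by simp⟩
    simpa using hk

lemma isLowerSet (n : ℕ) : IsLowerSet (SchreierFam n) := by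
  induction n with
  | zero => exact fun F G hGF hF => (card_le_card hGF).trans hF
  | succ n ih =>
    rintro _ G hGF ⟨k, Fs, hFs, hlt, hk, rfl⟩
    refine ⟨k, fun i => Fs i ∩ G, fun i => ih inter_subset_left (hFs i),
      fun i j hij a ha b hb => hlt i j hij a (mem_inter.1 ha).1 b (mem_inter.1 hb).1,
      fun i a ha => hk i a (mem_inter.1 ha).1, ?_⟩
    rw [← biUnion_inter, inter_eq_right.2 hGF]

lemma biUnion_mem_succ {j n : ℕ} {F : ℕ → Finset ℕ} (hF : ∀ t, F t ∈ SchreierFam j)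
    (hlt : ∀ s t, s < t → FinLt (F s) (F t)) (hn : ∀ t < n, ∀ a ∈ F t, n ≤ a) :
    (range n).biUnion F ∈ SchreierFam (j + 1) := by
  refine ⟨n, fun t => F t, fun t => hF t, fun s t hst => hlt s t hst,
    fun t => hn t t.isLt, ?_⟩
  ext a
  simp [Fin.exists_iff]

/-- `S_p[S_q] ⊆ S_{p+q}`. -/
lemma biUnion_mem_add {ι : Type*} [LinearOrder ι] {E K : ι → Finset ℕ} {p : ℕ}
    (hne : ∀ i, (E i).Nonempty) (hlt : ∀ i j, i < j → FinLt (E i) (E j))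
    (hKE : ∀ i, K i ⊆ E i) (hK : ∀ i, K i ∈ SchreierFam p) :
    ∀ {q : ℕ} {s : Finset ι}, s.image (fun i => sInf (E i : Set ℕ)) ∈ SchreierFam q →
      s.biUnion K ∈ SchreierFam (p + q) := by
  classical
  have hmono := strictMono_sInf_of_finLt hne hlt
  intro q
  induction q with
  | zero =>
    intro s hs
    rcases s.eq_empty_or_nonempty with rfl | ⟨i, hi⟩
    · simpa using empty_mem p
    · have hsi : ∀ j ∈ s, j = i := fun j hj =>
        hmono.injective (card_le_one.1 hs _ (mem_image_of_mem _ hj) _ (mem_image_of_mem _ hi))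
      refine isLowerSet p (fun a ha => ?_) (hK i)
      obtain ⟨j, hj, haj⟩ := mem_biUnion.1 ha
      rwa [hsi j hj] at haj
  | succ q ih =>
    rintro s ⟨k, Ms, hMs, hMlt, hMk, hMeq⟩
    let part : Fin k → Finset ι := fun t => {i ∈ s | sInf (E i : Set ℕ) ∈ Ms t}
    refine ⟨k, fun t => (part t).biUnion K, fun t => ih ?_, ?_, ?_, ?_⟩
    · refine isLowerSet q (fun a ha => ?_) (hMs t)
      obtain ⟨i, hi, rfl⟩ := mem_image.1 ha
      exact (mem_filter.1 hi).2
    · intro t u htu a ha b hb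
      obtain ⟨i, hi, hai⟩ := mem_biUnion.1 ha
      obtain ⟨j, hj, hbj⟩ := mem_biUnion.1 hb
      have hij : i < j := hmono.lt_iff_lt.1
        (hMlt t u htu _ (mem_filter.1 hi).2 _ (mem_filter.1 hj).2)
      exact hlt i j hij a (hKE i hai) b (hKE j hbj)
    · intro t a ha
      obtain ⟨i, hi, hai⟩ := mem_biUnion.1 ha
      exact (hMk t _ (mem_filter.1 hi).2).trans (Nat.sInf_le (hKE i hai))
    · ext a
      simp only [mem_biUnion, mem_univ, true_and, part, mem_filter]
      constructor
      · rintro ⟨i, hi, hai⟩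
        have : sInf (E i : Set ℕ) ∈ univ.biUnion Ms := hMeq ▸ mem_image_of_mem _ hi
        obtain ⟨t, -, ht⟩ := mem_biUnion.1 this
        exact ⟨t, i, ⟨hi, ht⟩, hai⟩
      · rintro ⟨t, i, ⟨hi, -⟩, hai⟩
        exact ⟨i, hi, hai⟩

end SchreierFam

def l1Norm (x : C00) : ℝ := ∑ k ∈ x.support, |x k|

lemma l1Norm_nonneg (x : C00) : 0 ≤ l1Norm x :=
  sum_nonneg fun k _ => abs_nonneg (x k)

lemma abs_apply_le_l1Norm (x : C00) (k : ℕ) : |x k| ≤ l1Norm x := by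
  by_cases hk : k ∈ x.support
  · exact single_le_sum (fun i _ => abs_nonneg (x i)) hk
  · rw [Finsupp.notMem_support_iff.1 hk, abs_zero]
    exact l1Norm_nonneg x

lemma l1Norm_restr (E : Finset ℕ) (x : C00) :
    l1Norm (restr E x) = ∑ k ∈ x.support ∩ E, |x k| := by
  rw [l1Norm, support_restr, filter_mem_eq_inter]
  exact sum_congr rfl fun k hk => by simp [(mem_inter.1 hk).2]

lemma sum_l1Norm_restr_le {ι : Type*} (s : Finset ι) {E : ι → Finset ℕ}
    (hE : (s : Set ι).PairwiseDisjoint E) (x : C00) :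
    ∑ i ∈ s, l1Norm (restr (E i) x) ≤ l1Norm x := by
  classical
  simp_rw [l1Norm_restr]
  rw [← sum_biUnion (hE.mono fun i => inter_subset_right)]
  exact sum_le_sum_of_subset_of_nonneg (biUnion_subset.2 fun i _ => inter_subset_left)
    fun k _ _ => abs_nonneg (x k)

section SchreierNorm

open Classical in
/-- The norm of `x` in the Schreier space of `S_d`; maximizing over `H ⊆ supp x` suffices
since `S_d` is hereditary. -/
def schreierNorm (d : ℕ) (x : C00) : ℝ :=
  (x.support.powerset.filter (· ∈ SchreierFam d)).sup'
    ⟨∅, mem_filter.2 ⟨empty_mem_powerset _, SchreierFam.empty_mem d⟩⟩ fun H => ∑ k ∈ H, |x k|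

variable {d : ℕ} {x : C00}

lemma sum_abs_le_schreierNorm {H : Finset ℕ} (hH : H ∈ SchreierFam d) :
    ∑ k ∈ H, |x k| ≤ schreierNorm d x := by
  classical
  calc ∑ k ∈ H, |x k| = ∑ k ∈ H with k ∈ x.support, |x k| :=
        (sum_filter_of_ne fun k _ hk => Finsupp.mem_support_iff.2 (abs_ne_zero.1 hk)).symm
    _ ≤ schreierNorm d x :=
        le_sup' (fun H => ∑ k ∈ H, |x k|) (mem_filter.2 ⟨mem_powerset.2 fun k hk =>
          (mem_filter.1 hk).2, SchreierFam.isLowerSet d (filter_subset _ H) hH⟩)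

lemma schreierNorm_nonneg : 0 ≤ schreierNorm d x := by
  simpa using sum_abs_le_schreierNorm (x := x) (SchreierFam.empty_mem d)

lemma abs_apply_le_schreierNorm (hx0 : x 0 = 0) (k : ℕ) : |x k| ≤ schreierNorm d x := by
  rcases eq_or_ne (x k) 0 with hk | hk
  · rw [hk, abs_zero]
    exact schreierNorm_nonneg
  have hk1 : 1 ≤ k := Nat.one_le_iff_ne_zero.2 (by rintro rfl; exact hk hx0)
  simpa using sum_abs_le_schreierNorm (x := x) (SchreierFam.singleton_mem d hk1)

lemma schreierNorm_le {c : ℝ} (h : ∀ H ∈ SchreierFam d, ∑ k ∈ H, |x k| ≤ c) :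
    schreierNorm d x ≤ c := by
  classical
  exact sup'_le _ _ fun H hH => h H (mem_filter.1 hH).2

lemma exists_sum_abs_eq_schreierNorm (d : ℕ) (x : C00) :
    ∃ H ∈ SchreierFam d, H ⊆ x.support ∧ ∑ k ∈ H, |x k| = schreierNorm d x := by
  classical
  obtain ⟨H, hH, hval⟩ := exists_mem_eq_sup'
    ⟨∅, mem_filter.2 ⟨empty_mem_powerset _, SchreierFam.empty_mem d⟩⟩
    (fun H : Finset ℕ => ∑ k ∈ H, |x k|)
  exact ⟨H, (mem_filter.1 hH).2, mem_powerset.1 (mem_filter.1 hH).1, hval.symm⟩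

lemma sum_schreierNorm_restr_le {p q m : ℕ} {E : Fin m → Finset ℕ}
    (hE : AdmissibleSets (SchreierFam q) E) (x : C00) :
    ∑ i, schreierNorm p (restr (E i) x) ≤ schreierNorm (p + q) x := by
  classical
  choose H hHS hHsupp hHeq using fun i => exists_sum_abs_eq_schreierNorm p (restr (E i) x)
  have hHE : ∀ i, H i ⊆ E i := fun i => (hHsupp i).trans (support_restr_subset _ _)
  calc ∑ i, schreierNorm p (restr (E i) x) = ∑ i, ∑ k ∈ H i, |x k| :=
        sum_congr rfl fun i _ => by
          rw [← hHeq i]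
          exact sum_congr rfl fun k hk => by simp [hHE i hk]
    _ = ∑ k ∈ univ.biUnion H, |x k| :=
        (sum_biUnion (Set.PairwiseDisjoint.mono (hE.pairwise_disjoint.set_pairwise _) hHE)).symm
    _ ≤ schreierNorm (p + q) x :=
        sum_abs_le_schreierNorm (SchreierFam.biUnion_mem_add hE.1 hE.2.1 hHE hHS hE.2.2)

lemma sum_l1Norm_add_schreierNorm_restr_le {p q m : ℕ} {E : Fin m → Finset ℕ}
    (hE : AdmissibleSets (SchreierFam q) E) {a : ℝ} (ha : 0 ≤ a) (x : C00) :
    ∑ i, (a * l1Norm (restr (E i) x) + schreierNorm p (restr (E i) x)) ≤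
      a * l1Norm x + schreierNorm (p + q) x := by
  rw [sum_add_distrib, ← mul_sum]
  exact add_le_add (mul_le_mul_of_nonneg_left
    (sum_l1Norm_restr_le _ (hE.pairwise_disjoint.set_pairwise _) x) ha)
    (sum_schreierNorm_restr_le hE x)

end SchreierNorm

namespace MixedTsirelsonNorm

variable {θ : ℕ → ℝ} {nrm : C00 → ℝ}

lemma abs_apply_le (hT : MixedTsirelsonNorm θ nrm) (x : C00) (k : ℕ) : |x k| ≤ nrm x := by
  rw [hT x]
  refine le_max_of_le_left (le_csSup ⟨l1Norm x, ?_⟩ ⟨k, rfl⟩)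
  rintro _ ⟨i, rfl⟩
  exact abs_apply_le_l1Norm x i

/-- Since `θ_1 < 1`, the term `θ_1 ‖x‖` on the right may be absorbed. -/
lemma le_of_forall_admissible (hreg : RegularSeq θ) (hT : MixedTsirelsonNorm θ nrm) {x : C00}
    {c : ℝ} (hc : 0 ≤ c) (hsup : ∀ k, |x k| ≤ c)
    (hadm : ∀ (q m : ℕ) (E : Fin m → Finset ℕ), 1 ≤ q → AdmissibleSets (SchreierFam q) E →
      θ q * ∑ i, nrm (restr (E i) x) ≤ max c (θ 1 * nrm x)) :
    nrm x ≤ c := by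
  have h : nrm x ≤ max c (θ 1 * nrm x) := by
    calc nrm x = _ := hT x
      _ ≤ _ := max_le (le_max_of_le_left (Real.sSup_le (by rintro _ ⟨k, rfl⟩; exact hsup k) hc))
        (Real.sSup_le (by rintro _ ⟨q, m, E, hq, hE, rfl⟩; exact hadm q m E hq hE)
          (le_max_of_le_left hc))
  rcases le_max_iff.1 h with h | h
  · exact h
  · nlinarith [hreg.1 1 le_rfl]

lemma sum_nrm_restr_eq_of_support_subset (hn : IsNorm nrm) {S : Set (Finset ℕ)} {m : ℕ}
    {E : Fin m → Finset ℕ} (hE : AdmissibleSets S E) {x : C00} {i₀ : Fin m}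
    (h : x.support ⊆ E i₀) : ∑ i, nrm (restr (E i) x) = nrm x := by
  rw [sum_eq_single i₀ (fun i _ hi => ?_) (by simp), restr_eq_self h]
  rw [restr_eq_zero ((hE.pairwise_disjoint hi.symm).mono_left h), hn.map_zero]

lemma nrm_single (hreg : RegularSeq θ) (hn : IsNorm nrm) (hT : MixedTsirelsonNorm θ nrm)
    (k : ℕ) (c : ℝ) : nrm (Finsupp.single k c) = |c| := by
  refine le_antisymm (hT.le_of_forall_admissible hreg (abs_nonneg c) (fun i => ?_)
    fun q m E hq hE => le_max_of_le_right ?_) (by simpa using hT.abs_apply_le (.single k c) k)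
  · rw [Finsupp.single_apply]
    split_ifs <;> simp
  · have hsum : ∑ i, nrm (restr (E i) (.single k c)) ≤ nrm (.single k c) := by
      by_cases hk : ∃ i₀, k ∈ E i₀
      · obtain ⟨i₀, hi₀⟩ := hk
        exact (sum_nrm_restr_eq_of_support_subset hn hE
          (Finsupp.support_single_subset.trans (singleton_subset_iff.2 hi₀))).le
      · simp only [not_exists] at hk
        rw [sum_eq_zero fun i _ => by
          rw [restr_eq_zero ((disjoint_singleton_left.2 (hk i)).mono_left
            Finsupp.support_single_subset), hn.map_zero]]
        exact hn.nonneg _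
    exact mul_le_mul (hreg.anti le_rfl hq) hsum (sum_nonneg fun i _ => hn.nonneg _)
      (hreg.pos le_rfl).le

lemma le_l1Norm (hreg : RegularSeq θ) (hn : IsNorm nrm) (hT : MixedTsirelsonNorm θ nrm)
    (x : C00) : nrm x ≤ l1Norm x := by
  conv_lhs => rw [← Finsupp.sum_single x]
  exact (hn.sum_le _ _).trans_eq (sum_congr rfl fun k _ => hT.nrm_single hreg hn k (x k))

lemma sum_nrm_restr_le_l1Norm (hreg : RegularSeq θ) (hn : IsNorm nrm)
    (hT : MixedTsirelsonNorm θ nrm) {S : Set (Finset ℕ)} {m : ℕ} {E : Fin m → Finset ℕ}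
    (hE : AdmissibleSets S E) (x : C00) : ∑ i, nrm (restr (E i) x) ≤ l1Norm x :=
  (sum_le_sum fun _ _ => hT.le_l1Norm hreg hn _).trans
    (sum_l1Norm_restr_le _ (hE.pairwise_disjoint.set_pairwise _) x)

lemma theta_mul_sum_le (hreg : RegularSeq θ) (hn : IsNorm nrm) (hT : MixedTsirelsonNorm θ nrm)
    {x : C00} {q m : ℕ} {E : Fin m → Finset ℕ} (hq : 1 ≤ q)
    (hE : AdmissibleSets (SchreierFam q) E) : θ q * ∑ i, nrm (restr (E i) x) ≤ nrm x := by
  rw [hT x]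
  refine le_max_of_le_right (le_csSup ⟨l1Norm x, ?_⟩ ⟨q, m, E, hq, hE, rfl⟩)
  rintro _ ⟨q', m', E', hq', hE', rfl⟩
  calc θ q' * ∑ i, nrm (restr (E' i) x) ≤ 1 * l1Norm x :=
        mul_le_mul (hreg.le_one hq') (hT.sum_nrm_restr_le_l1Norm hreg hn hE' x)
          (sum_nonneg fun i _ => hn.nonneg _) zero_le_one
    _ = l1Norm x := one_mul _

/-- Induction on `|supp x|`: an admissible family either has one set carrying all of
`supp x` (absorbed as `θ_1 ‖x‖`), or cuts `x` into pieces of smaller support, for which the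
bound at level `b + 1 - q`, multiplied by `θ_q`, sums to the bound at level `b + 1` by
`θ_q θ_{b+1-q} ≤ θ_{b+1}` and `S_{b-q}[S_q] ⊆ S_b`. -/
theorem le_theta_mul_l1Norm_add_schreierNorm (hreg : RegularSeq θ) (hn : IsNorm nrm)
    (hT : MixedTsirelsonNorm θ nrm) (b : ℕ) {x : C00} (hx0 : x 0 = 0) :
    nrm x ≤ θ (b + 1) * l1Norm x + schreierNorm b x := by
  induction hN : x.support.card using Nat.strong_induction_on generalizing x b with
  | _ N ih =>
  have hθb : 0 < θ (b + 1) := hreg.pos (Nat.le_add_left 1 b)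
  have hl1 : 0 ≤ θ (b + 1) * l1Norm x := mul_nonneg hθb.le (l1Norm_nonneg x)
  refine hT.le_of_forall_admissible hreg (add_nonneg hl1 schreierNorm_nonneg)
    (fun k => ?_) fun q m E hq hE => ?_
  · exact (abs_apply_le_schreierNorm hx0 k).trans (le_add_of_nonneg_left hl1)
  have hsum0 : 0 ≤ ∑ i, nrm (restr (E i) x) := sum_nonneg fun i _ => hn.nonneg _
  rcases le_or_gt (b + 1) q with hbq | hqb
  · refine le_max_of_le_left ((mul_le_mul (hreg.anti (Nat.le_add_left 1 b) hbq)
      (hT.sum_nrm_restr_le_l1Norm hreg hn hE x) hsum0 hθb.le).trans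
      (le_add_of_nonneg_right schreierNorm_nonneg))
  by_cases hcover : ∃ i₀, x.support ⊆ E i₀
  · obtain ⟨i₀, hi₀⟩ := hcover
    refine le_max_of_le_right ?_
    rw [sum_nrm_restr_eq_of_support_subset hn hE hi₀]
    exact mul_le_mul_of_nonneg_right (hreg.anti le_rfl hq) (hn.nonneg x)
  simp only [not_exists] at hcover
  obtain ⟨p, rfl⟩ : ∃ p, b = p + q := ⟨b - q, by omega⟩
  have hpiece : ∀ i, nrm (restr (E i) x) ≤
      θ (p + 1) * l1Norm (restr (E i) x) + schreierNorm p (restr (E i) x) := by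
    intro i
    refine ih _ ?_ p (by simp [hx0]) rfl
    rw [← hN, support_restr]
    exact card_lt_card (filter_ssubset.2 (not_subset.1 (hcover i)))
  have hθ : θ q * θ (p + 1) ≤ θ (p + q + 1) := by
    simpa [add_comm, add_assoc] using hreg.mul_le hq (Nat.le_add_left 1 p)
  have hsum : ∑ i, nrm (restr (E i) x) ≤ θ (p + 1) * l1Norm x + schreierNorm (p + q) x :=
    (sum_le_sum fun i _ => hpiece i).trans (sum_l1Norm_add_schreierNorm_restr_le hE
      (hreg.pos (Nat.le_add_left 1 p)).le x)
  refine le_max_of_le_left ?_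
  calc θ q * ∑ i, nrm (restr (E i) x)
      ≤ θ q * (θ (p + 1) * l1Norm x + schreierNorm (p + q) x) :=
        mul_le_mul_of_nonneg_left hsum (hreg.pos hq).le
    _ ≤ θ (p + q + 1) * l1Norm x + schreierNorm (p + q) x := by
        nlinarith [hreg.le_one hq, l1Norm_nonneg x, schreierNorm_nonneg (d := p + q) (x := x)]

end MixedTsirelsonNorm

section Blocks

variable {θ : ℕ → ℝ} {nrm : C00 → ℝ}

lemma minSupp_eq_sInf_support (v : C00) : minSupp v = sInf (v.support : Set ℕ) := by
  rw [minSupp]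
  congr 1
  ext k
  simp

lemma minSupp_single (k : ℕ) {c : ℝ} (hc : c ≠ 0) : minSupp (.single k c) = k := by
  rw [minSupp_eq_sInf_support, Finsupp.support_single k hc, coe_singleton, csInf_singleton]

lemma support_blk_eBasis_subset (a : ℕ → ℝ) (m : ℕ → ℕ) (i : ℕ) :
    (blk eBasis a m i).support ⊆ Ico (m i) (m (i + 1)) := by
  classical
  refine Finsupp.support_finsetSum.trans (biUnion_subset.2 fun k hk => ?_)
  exact (Finsupp.support_smul.trans Finsupp.support_single_subset).trans
    (singleton_subset_iff.2 hk)

lemma blk_eBasis_eq_single {a : ℕ → ℝ} {m : ℕ → ℕ} {i : ℕ} (hm : m i < m (i + 1))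
    (ha : ∀ k, m i < k → k < m (i + 1) → a k = 0) :
    blk eBasis a m i = .single (m i) (a (m i)) := by
  rw [blk, sum_eq_single_of_mem (m i) (left_mem_Ico.2 hm) fun k hk hki => ?_]
  · simp [eBasis]
  · rw [ha k (lt_of_le_of_ne (mem_Ico.1 hk).1 (Ne.symm hki)) (mem_Ico.1 hk).2, zero_smul]

lemma exists_strictMono_image_range_eq (s : Finset ℕ) :
    ∃ m : ℕ → ℕ, StrictMono m ∧ (range s.card).image m = s ∧
      ∀ i k, m i < k → k < m (i + 1) → k ∉ s := by
  classical
  set N := s.sup id + 1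
  have hsN : ∀ k ∈ s, k < N := fun k hk => Nat.lt_succ_of_le (le_sup (f := id) hk)
  set p : ℕ → Prop := fun k => k ∈ s ∨ N ≤ k
  have hinf : (Set.ofPred p).Infinite := (Set.Ici_infinite N).mono fun k hk => Or.inr hk
  have hcount : Nat.count p N = s.card := by
    rw [Nat.count_eq_card_filter_range]
    congr 1
    ext k
    simp only [mem_filter, mem_range, p]
    exact ⟨fun ⟨hk, h⟩ => h.resolve_right (not_le.2 hk), fun hk => ⟨hsN k hk, Or.inl hk⟩⟩
  refine ⟨Nat.nth p, Nat.nth_strictMono hinf, ?_, fun i k h1 h2 hk =>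
    (Nat.le_nth_of_lt_nth_succ h2 (Or.inl hk)).not_gt h1⟩
  ext k
  simp only [mem_image, mem_range]
  constructor
  · rintro ⟨i, hi, rfl⟩
    exact (Nat.nth_mem_of_infinite hinf i).resolve_right
      (not_le.2 (Nat.nth_lt_of_lt_count (hcount ▸ hi)))
  · intro hk
    exact ⟨Nat.count p k, hcount ▸ Nat.count_strict_mono (Or.inl hk) (hsN k hk),
      Nat.nth_count (Or.inl hk)⟩

lemma MixedTsirelsonNorm.theta_mul_sum_le_nrm_sum (hreg : RegularSeq θ) (hn : IsNorm nrm)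
    (hT : MixedTsirelsonNorm θ nrm) {q n : ℕ} (hq : 1 ≤ q) {y : ℕ → C00}
    (hy : ∀ i < n, y i ≠ 0) (hlt : ∀ i j, i < j → FinLt (y i).support (y j).support)
    (hS : (range n).image (fun i => minSupp (y i)) ∈ SchreierFam q) :
    θ q * ∑ i ∈ range n, nrm (y i) ≤ nrm (∑ i ∈ range n, y i) := by
  classical
  have hE : AdmissibleSets (SchreierFam q) fun i : Fin n => (y i).support := by
    refine ⟨fun i => Finsupp.support_nonempty_iff.2 (hy i i.isLt),
      fun i j hij => hlt i j hij, ?_⟩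
    convert hS using 1
    ext k
    simp [minSupp_eq_sInf_support, Fin.exists_iff]
  have hrestr : ∀ i : Fin n, restr (y i).support (∑ j ∈ range n, y j) = y i := by
    intro i
    rw [restr_sum, sum_eq_single_of_mem (i : ℕ) (mem_range.2 i.isLt) fun j _ hji => ?_,
      restr_eq_self subset_rfl]
    rcases hji.lt_or_gt with h | h
    · exact restr_eq_zero (hlt j i h).disjoint
    · exact restr_eq_zero (hlt i j h).disjoint.symm
  simpa [hrestr, Fin.sum_univ_eq_sum_range (fun i => nrm (y i))] using
    hT.theta_mul_sum_le hreg hn (x := ∑ j ∈ range n, y j) hq hE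

lemma theta_mem_deltaSetE (hreg : RegularSeq θ) (hn : IsNorm nrm)
    (hT : MixedTsirelsonNorm θ nrm) {j : ℕ} (hj : 1 ≤ j) :
    θ j ∈ deltaSetE (SchreierFam j) nrm eBasis := by
  refine ⟨(hreg.pos hj).le, fun n a m hm hne hS =>
    hT.theta_mul_sum_le_nrm_sum hreg hn hj hne (fun i i' hii' k hk k' hk' => ?_) hS⟩
  have h := mem_Ico.1 (support_blk_eBasis_subset a m i hk)
  have h' := mem_Ico.1 (support_blk_eBasis_subset a m i' hk')
  have := hm.monotone (show i + 1 ≤ i' from hii')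
  omega

lemma mul_l1Norm_le_of_mem_deltaSetE (hreg : RegularSeq θ) (hn : IsNorm nrm)
    (hT : MixedTsirelsonNorm θ nrm) {S : Set (Finset ℕ)} {δ : ℝ}
    (hδ : δ ∈ deltaSetE S nrm eBasis) {x : C00} (hx : x.support ∈ S) :
    δ * l1Norm x ≤ nrm x := by
  classical
  obtain ⟨m, hm, himg, hgap⟩ := exists_strictMono_image_range_eq x.support
  have hblk : ∀ i, blk eBasis x m i = .single (m i) (x (m i)) := fun i =>
    blk_eBasis_eq_single (hm (Nat.lt_succ_self i)) fun k h1 h2 =>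
      Finsupp.notMem_support_iff.1 (hgap i k h1 h2)
  have hxm : ∀ i ∈ range x.support.card, x (m i) ≠ 0 := fun i hi =>
    Finsupp.mem_support_iff.1 (himg ▸ mem_image_of_mem m hi)
  have hinj : Set.InjOn m (range x.support.card) := hm.injective.injOn
  have key := hδ.2 x.support.card x m hm
    (fun i hi => by rw [hblk]; exact Finsupp.single_ne_zero.2 (hxm i (mem_range.2 hi)))
    (by rwa [image_congr (g := m) fun i hi => by simp only [hblk, minSupp_single _ (hxm i hi)], himg])
  have hnorm : ∑ i ∈ range x.support.card, nrm (blk eBasis x m i) = l1Norm x := by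
    simp_rw [hblk, hT.nrm_single hreg hn]
    conv_rhs => rw [l1Norm, ← himg, sum_image hinj]
  have hsum : ∑ i ∈ range x.support.card, blk eBasis x m i = x := by
    simp_rw [hblk]
    conv_rhs => rw [← Finsupp.sum_single x, Finsupp.sum, ← himg, sum_image hinj]
  rwa [hnorm, hsum] at key

end Blocks

lemma sum_apply_le_sum_support {x : C00} (hx : ∀ k, 0 ≤ x k) (H : Finset ℕ) :
    ∑ k ∈ H, x k ≤ ∑ k ∈ x.support, x k := by
  classical
  calc ∑ k ∈ H, x k = ∑ k ∈ H with k ∈ x.support, x k :=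
        (sum_filter_of_ne fun k _ hk => Finsupp.mem_support_iff.2 hk).symm
    _ ≤ ∑ k ∈ x.support, x k :=
        sum_le_sum_of_subset_of_nonneg (fun k hk => (mem_filter.1 hk).2) fun k _ _ => hx k

/-- An `S_{j+1}` set is a union of at most `min H` sets of `S_j`. -/
lemma sum_le_mul_of_mem_schreierFam_succ {x : C00} {j : ℕ} {δ : ℝ}
    (hδ : ∀ H ∈ SchreierFam j, ∑ k ∈ H, x k ≤ δ) {H : Finset ℕ}
    (hH : H ∈ SchreierFam (j + 1)) {k₀ : ℕ} (hk₀ : k₀ ∈ H) : ∑ k ∈ H, x k ≤ k₀ * δ := by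
  classical
  obtain ⟨n, Hs, hHs, hlt, hn, rfl⟩ := hH
  have hδ0 : 0 ≤ δ := by simpa using hδ ∅ (SchreierFam.empty_mem j)
  obtain ⟨s, -, hk₀s⟩ := mem_biUnion.1 hk₀
  calc ∑ k ∈ univ.biUnion Hs, x k = ∑ s, ∑ k ∈ Hs s, x k :=
        sum_biUnion ((pairwise_disjoint_of_finLt hlt).set_pairwise _)
    _ ≤ ∑ _s : Fin n, δ := sum_le_sum fun s _ => hδ (Hs s) (hHs s)
    _ = n * δ := by simp
    _ ≤ k₀ * δ := mul_le_mul_of_nonneg_right (mod_cast hn s k₀ hk₀s) hδ0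

lemma sum_range_le_one_add {n t₀ : ℕ} {g : ℕ → ℝ} {c : ℝ} (hc : 0 ≤ c) (h1 : ∀ t, g t ≤ 1)
    (hne : ∀ t, t ≠ t₀ → g t ≤ c) : ∑ t ∈ range n, g t ≤ 1 + n * c := by
  calc ∑ t ∈ range n, g t ≤ ∑ t ∈ range n, (c + if t₀ = t then 1 else 0) :=
        sum_le_sum fun t _ => by
          split_ifs with ht
          · subst ht; linarith [h1 t₀]
          · simpa using hne t (Ne.symm ht)
    _ = n * c + if t₀ ∈ range n then 1 else 0 := by
        rw [sum_add_distrib, sum_const, card_range, nsmul_eq_mul, sum_ite_eq]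
    _ ≤ 1 + n * c := by split_ifs <;> linarith

/-- `x` is an `(ε, j + 1)`-special convex combination of `(e_k)`: a probability vector on an
`S_{j+1}` set giving mass at most `ε` to each `S_j` set. The shift `j + 1` avoids a truncated
`j - 1`. -/
structure IsSCC (j : ℕ) (ε : ℝ) (x : C00) : Prop where
  nonneg : ∀ k, 0 ≤ x k
  sum_eq_one : ∑ k ∈ x.support, x k = 1
  support_mem : x.support ∈ SchreierFam (j + 1)
  sum_le : ∀ H ∈ SchreierFam j, ∑ k ∈ H, x k ≤ ε

namespace IsSCC

variable {j : ℕ} {ε : ℝ} {x : C00}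

lemma support_nonempty (hx : IsSCC j ε x) : x.support.Nonempty :=
  nonempty_iff_ne_empty.2 fun h => by simpa [h] using hx.sum_eq_one

lemma l1Norm_eq_one (hx : IsSCC j ε x) : l1Norm x = 1 := by
  rw [l1Norm, ← hx.sum_eq_one]
  exact sum_congr rfl fun k _ => abs_of_nonneg (hx.nonneg k)

lemma schreierNorm_le (hx : IsSCC j ε x) : schreierNorm j x ≤ ε :=
  _root_.schreierNorm_le fun H hH => by
    simpa only [abs_of_nonneg (hx.nonneg _)] using hx.sum_le H hH

end IsSCC

lemma support_average_subset (n : ℕ) (x : ℕ → C00) :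
    ((n : ℝ)⁻¹ • ∑ t ∈ range n, x t).support ⊆ (range n).biUnion fun t => (x t).support := by
  classical
  exact Finsupp.support_smul.trans Finsupp.support_finsetSum

lemma isSCC_average {j n : ℕ} {ε : ℝ} (hn : 0 < n) {x : ℕ → C00} {M : ℕ → ℕ}
    (hMmono : Monotone M) (hM0 : n ≤ M 0) (hM : ∀ t, ∀ k ∈ (x t).support, M t ≤ k ∧ k < M (t + 1))
    (hnonneg : ∀ t k, 0 ≤ x t k) (hsum : ∀ t, ∑ k ∈ (x t).support, x t k = 1)
    (hS : ∀ t, (x t).support ∈ SchreierFam j)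
    (hmass : ∀ H ∈ SchreierFam j, ∑ t ∈ range n, ∑ k ∈ H, x t k ≤ n * ε) :
    IsSCC j ε ((n : ℝ)⁻¹ • ∑ t ∈ range n, x t) := by
  classical
  set y := (n : ℝ)⁻¹ • ∑ t ∈ range n, x t
  set U := (range n).biUnion fun t => (x t).support
  have hn' : (0 : ℝ) < n := Nat.cast_pos.2 hn
  have hsumy : ∀ H : Finset ℕ, ∑ k ∈ H, y k = (n : ℝ)⁻¹ * ∑ t ∈ range n, ∑ k ∈ H, x t k := by
    intro H
    simp only [y, Finsupp.smul_apply, Finsupp.finsetSum_apply, smul_eq_mul, ← mul_sum]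
    rw [sum_comm]
  have hU : ∀ t ∈ range n, ∑ k ∈ U, x t k = 1 := fun t ht =>
    (sum_subset (subset_biUnion_of_mem (fun t => (x t).support) ht)
      fun k _ hk => Finsupp.notMem_support_iff.1 hk).symm.trans (hsum t)
  refine ⟨fun k => ?_, ?_, ?_, fun H hH => ?_⟩
  · simpa [y, Finsupp.finsetSum_apply] using
      mul_nonneg (inv_nonneg.2 hn'.le) (sum_nonneg fun t _ => hnonneg t k)
  · rw [sum_subset (support_average_subset n x) fun k _ hk => Finsupp.notMem_support_iff.1 hk,
      hsumy, sum_congr rfl hU]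
    simp [hn'.ne']
  · refine SchreierFam.isLowerSet (j + 1) (support_average_subset n x)
      (SchreierFam.biUnion_mem_succ hS (fun s t hst k hk k' hk' => ?_)
        fun t _ k hk => hM0.trans ((hMmono (Nat.zero_le t)).trans (hM t k hk).1))
    exact (hM s k hk).2.trans_le ((hMmono hst).trans (hM t k' hk').1)
  · rw [hsumy, inv_mul_le_iff₀ hn']
    exact hmass H hH

lemma exists_isSCC_zero {ε : ℝ} (hε : 0 < ε) (M : ℕ) :
    ∃ x, IsSCC 0 ε x ∧ ∀ k ∈ x.support, M ≤ k := by
  obtain ⟨n, hn⟩ := exists_nat_one_div_lt hε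
  set M₀ := max M (n + 1)
  have hsupp : ∀ t, (eBasis (M₀ + t)).support = {M₀ + t} := fun t =>
    Finsupp.support_single _ one_ne_zero
  have hnonneg : ∀ t k, 0 ≤ eBasis (M₀ + t) k := fun t k => by
    rw [eBasis, Finsupp.single_apply]
    split_ifs <;> norm_num
  have hsum : ∀ t, ∑ k ∈ (eBasis (M₀ + t)).support, eBasis (M₀ + t) k = 1 := fun t => by
    simp [eBasis]
  refine ⟨_, isSCC_average (x := fun t => eBasis (M₀ + t)) (M := fun t => M₀ + t) n.succ_pos
    (fun _ _ h => Nat.add_le_add_left h M₀) (le_max_right M (n + 1))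
    (fun t k hk => by simp only [hsupp, mem_singleton] at hk; omega) hnonneg hsum
    (fun t => by simp [hsupp, SchreierFam]) fun H hH => ?_, fun k hk => ?_⟩
  · obtain ⟨h, hHh⟩ := card_le_one_iff_subset_singleton.1 (show H.card ≤ 1 from hH)
    refine (sum_range_le_one_add le_rfl (t₀ := h - M₀)
      (fun t => (sum_apply_le_sum_support (hnonneg t) H).trans (hsum t).le)
      fun t ht => ?_).trans ?_
    · calc ∑ k ∈ H, eBasis (M₀ + t) k ≤ ∑ k ∈ {h}, eBasis (M₀ + t) k :=
            sum_le_sum_of_subset_of_nonneg hHh fun k _ _ => hnonneg t k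
        _ = 0 := by
            rw [sum_singleton, eBasis, Finsupp.single_apply, if_neg]
            omega
    · push_cast
      rw [mul_zero, add_zero, ← div_le_iff₀' (by positivity)]
      exact hn.le
  · obtain ⟨t, -, hkt⟩ := mem_biUnion.1 (support_average_subset _ _ hk)
    rw [hsupp, mem_singleton] at hkt
    omega

/-- Of successive special convex combinations, the `t`-th starting at `M t` with mass
parameter `ε / (M t + 1)`, only the first one met by `H` may give `H` mass more than `ε`:
each later one starts beyond an element `k₀ ∈ H`, so `H` gets at most `k₀ ε / (M t + 1)`. -/
lemma sum_sum_le_one_add_of_mem_schreierFam_succ {j n : ℕ} {ε : ℝ} (hε : 0 ≤ ε)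
    {x : ℕ → C00} {M : ℕ → ℕ} (hMmono : Monotone M)
    (hM : ∀ t, ∀ k ∈ (x t).support, M t ≤ k ∧ k < M (t + 1))
    (hx : ∀ t, IsSCC j (ε / (M t + 1)) (x t)) {H : Finset ℕ} (hH : H ∈ SchreierFam (j + 1)) :
    ∑ t ∈ range n, ∑ k ∈ H, x t k ≤ 1 + n * ε := by
  classical
  have h1 : ∀ t, ∑ k ∈ H, x t k ≤ 1 := fun t =>
    (sum_apply_le_sum_support (hx t).nonneg H).trans (hx t).sum_eq_one.le
  have hzero : ∀ t, (∀ k ∈ H, k ∉ (x t).support) → ∑ k ∈ H, x t k ≤ ε := fun t h =>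
    (sum_eq_zero fun k hk => Finsupp.notMem_support_iff.1 (h k hk)).le.trans hε
  by_cases hmeet : ∃ t, ∃ k ∈ H, k ∈ (x t).support
  swap
  · exact sum_range_le_one_add hε h1 (t₀ := 0) fun t _ =>
      hzero t fun k hk hkt => hmeet ⟨t, k, hk, hkt⟩
  refine sum_range_le_one_add hε h1 (t₀ := Nat.find hmeet) fun t ht => ?_
  obtain ⟨k₀, hk₀H, hk₀⟩ := Nat.find_spec hmeet
  rcases ht.lt_or_gt with hlt | hgt
  · exact hzero t fun k hk hkt => Nat.find_min hmeet hlt ⟨k, hk, hkt⟩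
  have hk₀M : (k₀ : ℝ) ≤ M t + 1 := by
    exact_mod_cast ((hM _ k₀ hk₀).2.trans_le (hMmono hgt)).le.trans (Nat.le_succ _)
  calc ∑ k ∈ H, x t k ≤ k₀ * (ε / (M t + 1)) :=
        sum_le_mul_of_mem_schreierFam_succ (hx t).sum_le hH hk₀H
    _ ≤ ε := by
        rw [mul_div_assoc']
        exact div_le_of_le_mul₀ (by positivity) hε (by rw [mul_comm ε]; gcongr)

lemma exists_isSCC (j : ℕ) {ε : ℝ} (hε : 0 < ε) (M : ℕ) :
    ∃ x, IsSCC j ε x ∧ ∀ k ∈ x.support, M ≤ k := by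
  induction j generalizing ε M with
  | zero => exact exists_isSCC_zero hε M
  | succ j ih =>
  obtain ⟨n, hn⟩ := exists_nat_one_div_lt (half_pos hε)
  choose y hy hyM using fun M' : ℕ => ih (ε := ε / 2 / (M' + 1)) (by positivity) M'
  obtain ⟨Ms, hMs0, hMs⟩ : ∃ Ms : ℕ → ℕ, Ms 0 = max M (n + 1) ∧
      ∀ t, Ms (t + 1) = (y (Ms t)).support.sup id + 1 :=
    ⟨fun t => Nat.rec (max M (n + 1)) (fun _ m => (y m).support.sup id + 1) t, rfl, fun _ => rfl⟩
  have hM : ∀ t, ∀ k ∈ (y (Ms t)).support, Ms t ≤ k ∧ k < Ms (t + 1) := fun t k hk =>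
    ⟨hyM _ k hk, hMs t ▸ Nat.lt_succ_of_le (le_sup (f := id) hk)⟩
  have hMmono : Monotone Ms := monotone_nat_of_le_succ fun t => by
    obtain ⟨k, hk⟩ := (hy (Ms t)).support_nonempty
    exact (hM t k hk).1.trans (hM t k hk).2.le
  refine ⟨_, isSCC_average (x := fun t => y (Ms t)) n.succ_pos hMmono (hMs0 ▸ le_max_right _ _) hM
    (fun t => (hy _).nonneg) (fun t => (hy _).sum_eq_one) (fun t => (hy _).support_mem)
    fun H hH => ?_, fun k hk => ?_⟩
  · refine (sum_sum_le_one_add_of_mem_schreierFam_succ (half_pos hε).le hMmono hM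
      (fun t => hy _) hH).trans ?_
    rw [one_div, inv_lt_iff_one_lt_mul₀ (by positivity)] at hn
    push_cast
    linarith
  · obtain ⟨t, -, hkt⟩ := mem_biUnion.1 (support_average_subset _ _ hk)
    exact (hMs0 ▸ le_max_left M (n + 1)).trans ((hMmono (Nat.zero_le t)).trans (hM t k hkt).1)

/-- Theorem 4.14: `δ_j(X) = θ_j` for every `j ≥ 1`, where `δ_j(X)` is computed for
the unit vector basis `(e_i)` of `X = T(θ_n,S_n)`. -/
theorem delta_j_of_basis_eq_theta_j
    (θ : ℕ → ℝ) (hreg : RegularSeq θ)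
    (nrm : C00 → ℝ) (hn : IsNorm nrm) (hT : MixedTsirelsonNorm θ nrm)
    (j : ℕ) (hj : 1 ≤ j) :
    deltaE (SchreierFam j) nrm eBasis = θ j := by
  refine IsGreatest.csSup_eq ⟨theta_mem_deltaSetE hreg hn hT hj, fun δ hδ => ?_⟩
  obtain ⟨i, rfl⟩ : ∃ i, j = i + 1 := ⟨j - 1, by omega⟩
  refine le_of_forall_pos_le_add fun ε hε => ?_
  obtain ⟨x, hx, hx1⟩ := exists_isSCC i hε 1
  have hx0 : x 0 = 0 := Finsupp.notMem_support_iff.1 fun h => absurd (hx1 0 h) (by omega)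
  calc δ = δ * l1Norm x := by rw [hx.l1Norm_eq_one, mul_one]
    _ ≤ nrm x := mul_l1Norm_le_of_mem_deltaSetE hreg hn hT hδ hx.support_mem
    _ ≤ θ (i + 1) * l1Norm x + schreierNorm i x :=
        hT.le_theta_mul_l1Norm_add_schreierNorm hreg hn i hx0
    _ ≤ θ (i + 1) + ε := by
        rw [hx.l1Norm_eq_one, mul_one]
        exact add_le_add_right hx.schreierNorm_le _

end
end
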